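/- Let (K, v) be a separably closed valued field of characteristic p > 0 with valuation ring O and value group Γ = v(K^×). For j = 1, 2, let r_j(x) = ∑_{i=0}^{d_j} a_{j,i}·x^{p^i} be additive polynomials with all a_{j,i} ∈ O, a_{j,0} ≠ 0, and min_i v(a_{j,i}) = 0. Let b_1, b_2 ∈ K and δ_1, δ_2 ∈ Γ, and suppose Υ(r_1, δ_1) ≤ Υ(r_2, δ_2). Then there exists u ∈ K with v(r_1(u) − b_1) ≥ δ_1 and v(r_2(u) − b_2) ≥ δ_2 if and only if there exists u ∈ K with v(r_1(u) − b_1) ≥ δ_1 and r_2(u) = b_2. -/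

import Mathlib

/-!
If `v (r₂ u - b₂) ≥ δ₂`, the error `c = b₂ - r₂ u` is corrected by some `w` with `r₂ w = c` and
`v w ≥ μ₂ ≥ μ₁`: then `r₂ (u + w) = b₂` by additivity, while `v (r₁ w) ≥ δ₁`, so the first
condition survives. Such a `w` exists because `r₂ X - c` is separable (its derivative is the
constant `a₂ 0`), hence splits over `K`, and by Vieta's formulas its roots cannot all have
valuation `< μ₂` once `v c ≥ δ₂ = min_i (pⁱ μ₂ + v a₂ᵢ)`.
-/

/-- A valuation on a field `K` with values in the linearly ordered abelian group `Γ`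
(together with `∞ = ⊤`), surjective onto `Γ`, i.e. `Γ = v(K^×)`. -/
structure ValuedFieldAux (K : Type*) [Field K] (Γ : Type*)
    [AddCommGroup Γ] [LinearOrder Γ] [IsOrderedAddMonoid Γ] where
  v : K → WithTop Γ
  v_eq_top_iff : ∀ x : K, v x = ⊤ ↔ x = 0
  v_mul : ∀ x y : K, v (x * y) = v x + v y
  v_add : ∀ x y : K, min (v x) (v y) ≤ v (x + y)
  v_surj : ∀ γ : Γ, ∃ x : K, v x = (γ : WithTop Γ)


section

open Polynomial Finset

variable {K : Type*} [Field K] {Γ : Type*} [AddCommGroup Γ] [LinearOrder Γ] [IsOrderedAddMonoid Γ]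

namespace ValuedFieldAux

theorem v_one (vf : ValuedFieldAux K Γ) : vf.v 1 = 0 := by
  obtain ⟨g, hg⟩ := WithTop.ne_top_iff_exists.1 (mt (vf.v_eq_top_iff 1).1 one_ne_zero)
  have h := vf.v_mul 1 1
  rw [mul_one, ← hg, ← WithTop.coe_add, WithTop.coe_eq_coe, left_eq_add] at h
  rw [← hg, h, WithTop.coe_zero]

def toAddValuation (vf : ValuedFieldAux K Γ) : AddValuation K (WithTop Γ) :=
  AddValuation.of vf.v ((vf.v_eq_top_iff 0).2 rfl) vf.v_one vf.v_add vf.v_mul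

theorem toAddValuation_apply (vf : ValuedFieldAux K Γ) (x : K) : vf.toAddValuation x = vf.v x :=
  rfl

end ValuedFieldAux

namespace AddValuation

theorem le_map_multiset_sum {R Γ₀ : Type*} [Ring R] [LinearOrderedAddCommMonoidWithTop Γ₀]
    (v : AddValuation R Γ₀) {s : Multiset R} {g : Γ₀} (h : ∀ x ∈ s, g ≤ v x) :
    g ≤ v s.sum := by
  induction s using Multiset.induction_on with
  | empty => simp
  | cons a s ih =>
    rw [Multiset.sum_cons]
    exact v.map_le_add (h a (s.mem_cons_self a))
      (ih fun x hx => h x (Multiset.mem_cons_of_mem hx))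

theorem map_multiset_prod_lt_card_nsmul {R : Type*} [CommRing R] (v : AddValuation R (WithTop Γ))
    {s : Multiset R} (hs : s ≠ 0) {μ : Γ}
    (h : ∀ x ∈ s, v x < μ) : v s.prod < Multiset.card s • (μ : WithTop Γ) := by
  induction s using Multiset.induction_on with
  | empty => exact absurd rfl hs
  | cons a s ih =>
    have ha : v a < μ := h a (s.mem_cons_self a)
    rw [Multiset.prod_cons, v.map_mul, Multiset.card_cons, succ_nsmul']
    rcases eq_or_ne s 0 with rfl | hs
    · simpa using ha
    · exact WithTop.add_lt_add ha (ih hs fun x hx => h x (Multiset.mem_cons_of_mem hx))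

/-- If all roots had valuation `< μ`, Vieta's formulas would give
`v (f.coeff 0) > v (f.coeff k) + k • μ`: split the roots into a set `S` of `natDegree - k` roots
whose product has minimal valuation, which bounds `v (f.coeff k)` from below, and the `k`
remaining ones. -/
theorem exists_mem_roots_le_of_splits (v : AddValuation K (WithTop Γ)) {f : K[X]}
    (hf : f.Splits) (hf0 : f.coeff 0 ≠ 0) {k : ℕ} (hk : 0 < k) {μ : Γ}
    (hμ : v (f.coeff k) + k • (μ : WithTop Γ) ≤ v (f.coeff 0)) :
    ∃ z ∈ f.roots, (μ : WithTop Γ) ≤ v z := by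
  classical
  by_contra! hroots
  have hfk : f.coeff k ≠ 0 := by
    rintro hfk
    rw [hfk, v.map_zero, top_add, top_le_iff, v.top_iff] at hμ
    exact hf0 hμ
  have hkn : k ≤ f.natDegree := le_natDegree_of_ne_zero hfk
  have hcard : f.roots.card = f.natDegree := hf.natDegree_eq_card_roots.symm
  set j := f.natDegree - k
  have hne : ((f.roots.powersetCard j).toFinset).Nonempty := by
    rw [Multiset.toFinset_nonempty, ← Multiset.card_pos, Multiset.card_powersetCard]
    exact Nat.choose_pos (by omega)
  obtain ⟨S, hS, hSmin⟩ := exists_min_image _ (fun S : Multiset K => v S.prod) hne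
  rw [Multiset.mem_toFinset, Multiset.mem_powersetCard] at hS
  obtain ⟨T, hST⟩ := Multiset.le_iff_exists_add.1 hS.1
  have hT : T.card = k := by
    have := congrArg Multiset.card hST
    rw [Multiset.card_add, hcard, hS.2] at this
    omega
  have hvS : v f.leadingCoeff + v S.prod ≤ v (f.coeff k) := by
    rw [coeff_eq_esymm_roots_of_splits hf hkn, v.map_mul, v.map_mul, v.map_pow, v.map_neg,
      v.map_one, nsmul_zero, add_zero]
    gcongr
    refine v.le_map_multiset_sum fun x hx => ?_
    obtain ⟨S', hS', rfl⟩ := Multiset.mem_map.1 hx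
    exact hSmin S' (Multiset.mem_toFinset.2 hS')
  have hvT : v T.prod < k • (μ : WithTop Γ) := hT ▸ v.map_multiset_prod_lt_card_nsmul
    (by rintro rfl; simp at hT; omega) fun x hx => hroots x (hST ▸ Multiset.mem_add.2 (.inr hx))
  have h0 : v (f.coeff 0) = (v f.leadingCoeff + v S.prod) + v T.prod := by
    rw [hf.coeff_zero_eq_leadingCoeff_mul_prod_roots, hST, Multiset.prod_add, v.map_mul,
      v.map_mul, v.map_mul, v.map_pow, v.map_neg, v.map_one, nsmul_zero, zero_add, add_assoc]
  have hfin : v f.leadingCoeff + v S.prod ≠ ⊤ := by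
    have := v.ne_top_iff.2 hf0
    rw [h0] at this
    exact (WithTop.add_ne_top.1 this).1
  have := calc v (f.coeff 0) = (v f.leadingCoeff + v S.prod) + v T.prod := h0
    _ < (v f.leadingCoeff + v S.prod) + k • (μ : WithTop Γ) := WithTop.add_lt_add_left hfin hvT
    _ ≤ v (f.coeff k) + k • (μ : WithTop Γ) := by gcongr
    _ ≤ v (f.coeff 0) := hμ
  exact lt_irrefl _ this

end AddValuation

noncomputable def additivePoly (p d : ℕ) (a : ℕ → K) : K[X] :=
  ∑ i ∈ range (d + 1), C (a i) * X ^ p ^ i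

section additivePoly

variable {p d : ℕ} {a : ℕ → K}

theorem eval_additivePoly (u : K) :
    (additivePoly p d a).eval u = ∑ i ∈ range (d + 1), a i * u ^ p ^ i := by
  simp [additivePoly, eval_finsetSum]

theorem eval_additivePoly_add [ExpChar K p] (u w : K) :
    (additivePoly p d a).eval (u + w) =
      (additivePoly p d a).eval u + (additivePoly p d a).eval w := by
  simp only [eval_additivePoly, add_pow_expChar_pow, mul_add, sum_add_distrib]

theorem coeff_additivePoly_zero (hp : p ≠ 0) : (additivePoly p d a).coeff 0 = 0 := by
  simp [additivePoly, finsetSum_coeff, coeff_X_pow, @eq_comm ℕ 0, hp]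

theorem coeff_additivePoly_pow (hp : 1 < p) {m : ℕ} (hm : m ≤ d) :
    (additivePoly p d a).coeff (p ^ m) = a m := by
  simp [additivePoly, finsetSum_coeff, coeff_X_pow, Nat.pow_right_injective hp |>.eq_iff, hm]

theorem derivative_additivePoly [CharP K p] :
    derivative (additivePoly p d a) = C (a 0) := by
  rw [additivePoly, derivative_sum, sum_eq_single 0]
  · simp
  · intro i _ hi
    rw [derivative_C_mul_X_pow, Nat.cast_pow, CharP.cast_eq_zero, zero_pow hi, mul_zero, C_0,
      zero_mul]
  · simp

theorem separable_additivePoly_sub_C [CharP K p] (ha : a 0 ≠ 0) (c : K) :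
    (additivePoly p d a - C c).Separable := by
  rw [separable_def, derivative_sub, derivative_C, sub_zero, derivative_additivePoly,
    ← mul_one (C (a 0)), isCoprime_mul_unit_left_right (isUnit_C.2 ha.isUnit)]
  exact isCoprime_one_right

theorem inf_le_map_eval_additivePoly (v : AddValuation K (WithTop Γ)) {μ : WithTop Γ} {w : K}
    (hw : μ ≤ v w) :
    (range (d + 1)).inf (fun i => p ^ i • μ + v (a i)) ≤ v ((additivePoly p d a).eval w) := by
  rw [eval_additivePoly]
  refine v.map_le_sum fun i hi => (inf_le hi).trans ?_
  rw [v.map_mul, v.map_pow, add_comm]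
  gcongr

/-- The hypothesis `hc` says `μ ≤ Υ(r, v c)`. -/
theorem exists_eval_additivePoly_eq [IsSepClosed K] [CharP K p] (hp : p.Prime)
    (v : AddValuation K (WithTop Γ)) (ha : a 0 ≠ 0) {μ : Γ} {c : K}
    (hc : (range (d + 1)).inf (fun i => p ^ i • (μ : WithTop Γ) + v (a i)) ≤ v c) :
    ∃ w, (additivePoly p d a).eval w = c ∧ (μ : WithTop Γ) ≤ v w := by
  rcases eq_or_ne c 0 with rfl | hc0
  · exact ⟨0, by simp [eval_additivePoly, hp.ne_zero], by simp⟩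
  set f := additivePoly p d a - C c
  obtain ⟨m, hm, hmin⟩ := exists_mem_eq_inf (range (d + 1)) ⟨0, by simp⟩
    (fun i => p ^ i • (μ : WithTop Γ) + v (a i))
  have hf0 : f.coeff 0 = -c := by simp [f, coeff_additivePoly_zero hp.ne_zero]
  have hfm : f.coeff (p ^ m) = a m := by
    simp [f, coeff_additivePoly_pow hp.one_lt (mem_range_succ_iff.1 hm), coeff_C, hp.ne_zero]
  obtain ⟨z, hz, hμz⟩ := v.exists_mem_roots_le_of_splits
    (IsSepClosed.splits_of_separable f (separable_additivePoly_sub_C ha c))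
    (by rwa [hf0, neg_ne_zero]) (pow_pos hp.pos m) (μ := μ)
    (by rw [hf0, hfm, v.map_neg, add_comm, ← hmin]; exact hc)
  refine ⟨z, ?_, hμz⟩
  have := (mem_roots'.1 hz).2
  rwa [IsRoot, eval_sub, eval_C, sub_eq_zero] at this

end additivePoly

end

theorem stmt_14_general (p : ℕ) (hp : p.Prime) (K : Type*) [Field K] [CharP K p] [IsSepClosed K]
    (Γ : Type*) [AddCommGroup Γ] [LinearOrder Γ] [IsOrderedAddMonoid Γ] (vf : ValuedFieldAux K Γ)
    (d₁ d₂ : ℕ) (a₁ a₂ : ℕ → K)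
    (ha₂0 : a₂ 0 ≠ 0) (b₁ b₂ : K) (δ₁ δ₂ μ₁ μ₂ : Γ)
    (hμ₁ : (δ₁ : WithTop Γ) = (Finset.range (d₁ + 1)).inf
      (fun i => p ^ i • (μ₁ : WithTop Γ) + vf.v (a₁ i)))
    (hμ₂ : (δ₂ : WithTop Γ) = (Finset.range (d₂ + 1)).inf
      (fun i => p ^ i • (μ₂ : WithTop Γ) + vf.v (a₂ i)))
    (hμ : μ₁ ≤ μ₂) :
    (∃ u : K,
        (δ₁ : WithTop Γ) ≤ vf.v ((∑ i ∈ Finset.range (d₁ + 1), a₁ i * u ^ (p ^ i)) - b₁) ∧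
        (δ₂ : WithTop Γ) ≤ vf.v ((∑ i ∈ Finset.range (d₂ + 1), a₂ i * u ^ (p ^ i)) - b₂)) ↔
    (∃ u : K,
        (δ₁ : WithTop Γ) ≤ vf.v ((∑ i ∈ Finset.range (d₁ + 1), a₁ i * u ^ (p ^ i)) - b₁) ∧
        (∑ i ∈ Finset.range (d₂ + 1), a₂ i * u ^ (p ^ i)) = b₂) := by
  have : Fact p.Prime := ⟨hp⟩
  set v := vf.toAddValuation
  simp only [← vf.toAddValuation_apply, ← eval_additivePoly] at hμ₁ hμ₂ ⊢
  constructor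
  · rintro ⟨u, h₁, h₂⟩
    rw [hμ₂, v.map_sub_swap] at h₂
    obtain ⟨w, hw, hμw⟩ := exists_eval_additivePoly_eq hp v ha₂0 h₂
    refine ⟨u + w, ?_, by rw [eval_additivePoly_add, hw, add_sub_cancel]⟩
    rw [eval_additivePoly_add, add_sub_right_comm]
    refine v.map_le_add h₁ ?_
    rw [hμ₁]
    exact inf_le_map_eval_additivePoly v ((WithTop.coe_le_coe.2 hμ).trans hμw)
  · rintro ⟨u, h₁, h₂⟩
    exact ⟨u, h₁, by simp [h₂]⟩

/-- Let `(K, v)` be a separably closed valued field of characteristic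
`p > 0`. For `j = 1, 2` let `r_j(x) = ∑_{i ≤ d_j} a_{j,i}·x^{p^i}` with coefficients in
`O`, `a_{j,0} ≠ 0` and `min_i v(a_{j,i}) = 0`. Let `b₁, b₂ ∈ K`, `δ₁, δ₂ ∈ Γ`, and let
`μ₁ = Υ(r₁, δ₁)`, `μ₂ = Υ(r₂, δ₂)` (i.e. `δ_j = min_i (p^i·μ_j + v(a_{j,i}))`), with
`μ₁ ≤ μ₂`. Then the system `v(r₁(u) − b₁) ≥ δ₁ ∧ v(r₂(u) − b₂) ≥ δ₂` is solvable iff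
the system `v(r₁(u) − b₁) ≥ δ₁ ∧ r₂(u) = b₂` is solvable. -/
theorem stmt_14 (p : ℕ) (hp : p.Prime) (K : Type*) [Field K] [CharP K p] [IsSepClosed K]
    (Γ : Type*) [AddCommGroup Γ] [LinearOrder Γ] [IsOrderedAddMonoid Γ] (vf : ValuedFieldAux K Γ)
    (d₁ d₂ : ℕ) (a₁ a₂ : ℕ → K)
    (ha₁ : ∀ i ≤ d₁, 0 ≤ vf.v (a₁ i)) (ha₁0 : a₁ 0 ≠ 0)
    (ha₁min : (Finset.range (d₁ + 1)).inf (fun i => vf.v (a₁ i)) = 0)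
    (ha₂ : ∀ i ≤ d₂, 0 ≤ vf.v (a₂ i)) (ha₂0 : a₂ 0 ≠ 0)
    (ha₂min : (Finset.range (d₂ + 1)).inf (fun i => vf.v (a₂ i)) = 0)
    (b₁ b₂ : K) (δ₁ δ₂ μ₁ μ₂ : Γ)
    (hμ₁ : (δ₁ : WithTop Γ) = (Finset.range (d₁ + 1)).inf
      (fun i => p ^ i • (μ₁ : WithTop Γ) + vf.v (a₁ i)))
    (hμ₂ : (δ₂ : WithTop Γ) = (Finset.range (d₂ + 1)).inf
      (fun i => p ^ i • (μ₂ : WithTop Γ) + vf.v (a₂ i)))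
    (hμ : μ₁ ≤ μ₂) :
    (∃ u : K,
        (δ₁ : WithTop Γ) ≤ vf.v ((∑ i ∈ Finset.range (d₁ + 1), a₁ i * u ^ (p ^ i)) - b₁) ∧
        (δ₂ : WithTop Γ) ≤ vf.v ((∑ i ∈ Finset.range (d₂ + 1), a₂ i * u ^ (p ^ i)) - b₂)) ↔
    (∃ u : K,
        (δ₁ : WithTop Γ) ≤ vf.v ((∑ i ∈ Finset.range (d₁ + 1), a₁ i * u ^ (p ^ i)) - b₁) ∧
        (∑ i ∈ Finset.range (d₂ + 1), a₂ i * u ^ (p ^ i)) = b₂) :=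
  stmt_14_general p hp K Γ vf d₁ d₂ a₁ a₂ ha₂0 b₁ b₂ δ₁ δ₂ μ₁ μ₂ hμ₁ hμ₂ hμ
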